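/- arXiv:1904.06573 — 3 statements merged into one kernel-verified Lean document; each statement's English description precedes it below -/
import Mathlib

section
/- Define q(n) = Σ_λ (-1)^λ · C(n, ⌊(n-1+5λ)/2⌋) over all integers λ. Then q(n) = q(n-1) + q(n-2) for all n ≥ 2, with q(0) = 0 and q(1) = 1; consequently q(n) = F(n), the n-th Fibonacci number. -/
/-- Binomial coefficient with integer arguments, zero out of range. -/
def C (n k : ℤ) : ℤ := if 0 ≤ k ∧ k ≤ n then (n.toNat.choose k.toNat : ℤ) else 0

/-- `q n = Σ_λ (-1)^λ C(n, ⌊(n-1+5λ)/2⌋)`, the sum over all integers `λ`. -/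
noncomputable def q (n : ℤ) : ℤ :=
  ∑ᶠ l : ℤ, (-1 : ℤ) ^ l.natAbs * C n ((n - 1 + 5 * l).fdiv 2)

/-!
Pascal's rule applied twice turns the `λ`-th summand of `q n` into the `λ`-th summands of
`q (n-1)` and `q (n-2)` plus a difference `T λ - T (λ - 1)`, where
`T λ = (-1)^λ C(n-2, (n-1+5λ)/2)` when `n - 1 + 5λ` is even and `T λ = 0` otherwise.
The differences telescope to zero over `λ ∈ ℤ`, which gives the Fibonacci recursion;
the sum for `q 0` has no nonzero term and that for `q 1` only `C(1, 0)`.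
-/

open Function

lemma neg_one_pow_natAbs_sub_one (l : ℤ) : (-1 : ℤ) ^ (l - 1).natAbs = -(-1) ^ l.natAbs := by
  rcases Int.even_or_odd l with h | h
  · rw [Odd.neg_one_pow (Int.natAbs_odd.mpr (h.sub_odd odd_one)),
      Even.neg_one_pow (Int.natAbs_even.mpr h)]
  · rw [Even.neg_one_pow (Int.natAbs_even.mpr (h.sub_odd odd_one)),
      Odd.neg_one_pow (Int.natAbs_odd.mpr h), neg_neg]

lemma finsum_sub_comp_sub_one {M : Type*} [AddCommGroup M] {f : ℤ → M}
    (hf : f.HasFiniteSupport) : ∑ᶠ l, (f l - f (l - 1)) = 0 := by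
  rw [finsum_sub_distrib hf (hf.fun_comp_of_injective sub_left_injective), sub_eq_zero]
  exact (finsum_comp_equiv (Equiv.subRight 1)).symm

namespace C

lemma eq_zero_of_not_mem_range {n k : ℤ} (h : ¬(0 ≤ k ∧ k ≤ n)) : C n k = 0 := if_neg h

lemma mem_range_of_ne_zero {n k : ℤ} (h : C n k ≠ 0) : 0 ≤ k ∧ k ≤ n :=
  not_not.mp (mt eq_zero_of_not_mem_range h)

lemma pascal {n : ℤ} (hn : 1 ≤ n) (k : ℤ) : C n k = C (n - 1) k + C (n - 1) (k - 1) := by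
  unfold C
  split_ifs
  · rw [show n.toNat = (n - 1).toNat + 1 by omega, show k.toNat = (k - 1).toNat + 1 by omega,
      Nat.choose_succ_succ, Nat.cast_add, add_comm]
  · obtain rfl : k = 0 := by omega
    simp
  · obtain rfl : k = n := by omega
    simp
  all_goals omega

lemma hasFiniteSupport_comp_ediv_two (n c : ℤ) {a : ℤ} (ha : a ≠ 0) :
    (fun l ↦ C n ((c + a * l) / 2)).HasFiniteSupport := by
  refine ((Set.finite_Icc 0 (2 * n + 1)).preimage
    (f := fun l ↦ c + a * l) fun x _ y _ hxy ↦ ?_).subset fun l hl ↦ ?_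
  · exact mul_left_cancel₀ ha (add_left_cancel hxy)
  · have := mem_range_of_ne_zero hl
    simp only [Set.mem_preimage, Set.mem_Icc]
    omega

end C

def qTerm (n l : ℤ) : ℤ := (-1) ^ l.natAbs * C n ((n - 1 + 5 * l) / 2)

lemma q_eq_finsum_qTerm (n : ℤ) : q n = ∑ᶠ l, qTerm n l := by
  simp only [q, qTerm, Int.fdiv_eq_ediv_of_nonneg _ zero_le_two]

lemma hasFiniteSupport_qTerm (n : ℤ) : (qTerm n).HasFiniteSupport :=
  (C.hasFiniteSupport_comp_ediv_two n (n - 1) (a := 5) (by norm_num)).subset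
    (support_mul_subset_right _ _)

def qBoundary (n l : ℤ) : ℤ :=
  if Even (n - 1 + 5 * l) then (-1) ^ l.natAbs * C (n - 2) ((n - 1 + 5 * l) / 2) else 0

lemma hasFiniteSupport_qBoundary (n : ℤ) : (qBoundary n).HasFiniteSupport := by
  refine (C.hasFiniteSupport_comp_ediv_two (n - 2) (n - 1) (a := 5) (by norm_num)).subset
    fun l hl ↦ ?_
  simp only [mem_support, qBoundary] at hl ⊢
  split_ifs at hl
  exacts [right_ne_zero_of_mul hl, absurd rfl hl]

lemma qTerm_eq {n : ℤ} (hn : 2 ≤ n) (l : ℤ) :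
    qTerm n l = qTerm (n - 1) l + qTerm (n - 2) l + (qBoundary n l - qBoundary n (l - 1)) := by
  unfold qTerm qBoundary
  have hn₁ : 1 ≤ n := by omega
  have hn₂ : 1 ≤ n - 1 := by omega
  have hn₃ : n - 1 - 1 = n - 2 := by ring
  obtain ⟨m, hm | hm⟩ := Int.even_or_odd' (n - 1 + 5 * l)
  · rw [if_pos ⟨m, by omega⟩, if_neg (Int.not_even_iff_odd.mpr ⟨m - 3, by omega⟩),
      show (n - 1 + 5 * l) / 2 = m by omega, show (n - 1 - 1 + 5 * l) / 2 = m - 1 by omega,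
      show (n - 2 - 1 + 5 * l) / 2 = m - 1 by omega, C.pascal hn₁ m, C.pascal hn₂ m, hn₃]
    ring
  · rw [if_neg (Int.not_even_iff_odd.mpr ⟨m, hm⟩), if_pos ⟨m - 2, by omega⟩,
      show (n - 1 + 5 * l) / 2 = m by omega, show (n - 1 - 1 + 5 * l) / 2 = m by omega,
      show (n - 2 - 1 + 5 * l) / 2 = m - 1 by omega,
      show (n - 1 + 5 * (l - 1)) / 2 = m - 2 by omega, neg_one_pow_natAbs_sub_one,
      C.pascal hn₁ m, C.pascal hn₂ (m - 1), hn₃, show m - 1 - 1 = m - 2 by ring]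
    ring

lemma q_rec {n : ℤ} (hn : 2 ≤ n) : q n = q (n - 1) + q (n - 2) := by
  have hB := hasFiniteSupport_qBoundary n
  simp only [q_eq_finsum_qTerm]
  rw [finsum_congr (qTerm_eq hn), finsum_add_distrib, finsum_add_distrib,
    finsum_sub_comp_sub_one hB, add_zero]
  exacts [hasFiniteSupport_qTerm _, hasFiniteSupport_qTerm _,
    (hasFiniteSupport_qTerm _).fun_add (hasFiniteSupport_qTerm _),
    hB.fun_sub (hB.fun_comp_of_injective sub_left_injective)]

lemma q_zero : q 0 = 0 := by
  rw [q_eq_finsum_qTerm]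
  exact finsum_eq_zero_of_forall_eq_zero fun l ↦ by
    rw [qTerm, C.eq_zero_of_not_mem_range (by omega), mul_zero]

lemma q_one : q 1 = 1 := by
  rw [q_eq_finsum_qTerm, finsum_eq_single _ 0 fun l hl ↦ by
    rw [qTerm, C.eq_zero_of_not_mem_range (by omega), mul_zero]]
  rfl

lemma q_natCast_eq_fib : ∀ N : ℕ, q N = Nat.fib N
  | 0 => q_zero
  | 1 => q_one
  | N + 2 => by
    push_cast [Nat.fib_add_two]
    rw [← q_natCast_eq_fib N, ← q_natCast_eq_fib (N + 1), q_rec (by omega), add_comm]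
    push_cast
    ring_nf

theorem gs2_amateur :
    (∀ n : ℤ, 2 ≤ n → q n = q (n - 1) + q (n - 2)) ∧ q 0 = 0 ∧ q 1 = 1 ∧
      ∀ n : ℤ, 0 ≤ n → q n = (Nat.fib n.toNat : ℤ) := by
  refine ⟨fun n hn ↦ q_rec hn, q_zero, q_one, fun n hn ↦ ?_⟩
  rw [← q_natCast_eq_fib, Int.toNat_of_nonneg hn]
end

section
/- Define r(n) = Σ_λ (-1)^λ · C(n, ⌊(n+3λ)/2⌋) over all integers λ. Then r(n) = 1 for all n ≥ 0. -/
/-- `r n = Σ_λ (-1)^λ C(n, ⌊(n+3λ)/2⌋)`, the sum over all integers `λ`. -/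
noncomputable def r (n : ℤ) : ℤ :=
  ∑ᶠ l : ℤ, (-1 : ℤ) ^ l.natAbs * C n ((n + 3 * l).fdiv 2)

/-- Pascal's rule for `C`. -/
lemma C_pascal (n k : ℤ) (hn : 1 ≤ n) : C n k = C (n - 1) k + C (n - 1) (k - 1) := by
  unfold C
  rcases lt_or_ge k 0 with hk | hk
  · rw [if_neg (by omega), if_neg (by omega), if_neg (by omega)]; ring
  rcases lt_or_ge n k with hk2 | hk2
  · rw [if_neg (by omega), if_neg (by omega), if_neg (by omega)]; ring
  rcases eq_or_lt_of_le hk with hk0 | hk1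
  · -- k = 0
    rw [if_pos ⟨hk, hk2⟩, if_pos ⟨by omega, by omega⟩, if_neg (by omega)]
    have : k.toNat = 0 := by omega
    simp [this]
  rcases eq_or_lt_of_le hk2 with hkn | hkn
  · -- k = n
    rw [if_pos ⟨hk, hk2⟩, if_neg (by omega), if_pos ⟨by omega, by omega⟩]
    have h1 : k.toNat = n.toNat := by omega
    have h2 : (k - 1).toNat = (n - 1).toNat := by omega
    rw [h1, h2, Nat.choose_self, Nat.choose_self]; ring
  · -- 1 ≤ k ≤ n - 1
    rw [if_pos ⟨hk, hk2⟩, if_pos ⟨by omega, by omega⟩, if_pos ⟨by omega, by omega⟩]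
    have h1 : n.toNat = (n - 1).toNat + 1 := by omega
    have h2 : k.toNat = (k - 1).toNat + 1 := by omega
    rw [h1, h2, Nat.choose_succ_succ]
    push_cast
    ring

lemma sign_shift (l : ℤ) : (-1 : ℤ) ^ (l - 1).natAbs = -(-1 : ℤ) ^ l.natAbs := by
  rcases Int.even_or_odd l with ⟨m, hm⟩ | ⟨m, hm⟩
  · rw [(Int.natAbs_odd.mpr ⟨m - 1, by omega⟩).neg_one_pow,
      (Int.natAbs_even.mpr ⟨m, by omega⟩).neg_one_pow]
  · rw [(Int.natAbs_even.mpr ⟨m, by omega⟩).neg_one_pow,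
      (Int.natAbs_odd.mpr ⟨m, by omega⟩).neg_one_pow]
    ring

/-- Correction term for the telescoping recurrence. -/
def W (n l : ℤ) : ℤ :=
  (-1 : ℤ) ^ l.natAbs * (if (n + 1 + 3 * l) % 2 = 0 then C n ((n + 1 + 3 * l).fdiv 2) else 0)

lemma key (n l : ℤ) (hn : 0 ≤ n) :
    (-1 : ℤ) ^ l.natAbs * C (n + 1) ((n + 1 + 3 * l).fdiv 2)
      = (-1 : ℤ) ^ l.natAbs * C n ((n + 3 * l).fdiv 2) + (W n l - W n (l - 1)) := by
  have e1 := Int.fdiv_eq_ediv_of_nonneg (n + 1 + 3 * l) (by norm_num : (0:ℤ) ≤ 2)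
  have e2 := Int.fdiv_eq_ediv_of_nonneg (n + 3 * l) (by norm_num : (0:ℤ) ≤ 2)
  have e3 := Int.fdiv_eq_ediv_of_nonneg (n + 1 + 3 * (l - 1)) (by norm_num : (0:ℤ) ≤ 2)
  rw [C_pascal (n + 1) _ (by omega)]
  have hs : n + 1 - 1 = n := by ring
  simp only [W, e1, e2, e3, hs, sign_shift]
  rcases Int.even_or_odd (n + 1 + 3 * l) with ⟨m, hm⟩ | ⟨m, hm⟩
  · -- n+1+3l even
    rw [if_pos (by omega), if_neg (by omega),
      show (n + 3 * l) / 2 = (n + 1 + 3 * l) / 2 - 1 by omega]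
    ring
  · -- n+1+3l odd
    rw [if_neg (by omega), if_pos (by omega),
      show (n + 3 * l) / 2 = (n + 1 + 3 * l) / 2 by omega,
      show (n + 1 + 3 * (l - 1)) / 2 = (n + 1 + 3 * l) / 2 - 1 by omega]
    ring

lemma C_bounds {n k : ℤ} (h : C n k ≠ 0) : 0 ≤ k ∧ k ≤ n := by
  unfold C at h
  split_ifs at h with hc
  · exact hc
  · exact absurd rfl h

lemma f_bounds {n l : ℤ} (hn : 0 ≤ n)
    (h : (-1 : ℤ) ^ l.natAbs * C n ((n + 3 * l).fdiv 2) ≠ 0) : -n - 1 ≤ l ∧ l ≤ n + 1 := by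
  have hC := C_bounds (right_ne_zero_of_mul h)
  rw [Int.fdiv_eq_ediv_of_nonneg _ (by norm_num : (0:ℤ) ≤ 2)] at hC
  omega

lemma W_bounds {n l : ℤ} (hn : 0 ≤ n) (h : W n l ≠ 0) : -n - 1 ≤ l ∧ l ≤ n + 1 := by
  unfold W at h
  have h2 := right_ne_zero_of_mul h
  split_ifs at h2 with hc
  · have hC := C_bounds h2
    rw [Int.fdiv_eq_ediv_of_nonneg _ (by norm_num : (0:ℤ) ≤ 2)] at hC
    omega
  · exact absurd rfl h2

lemma f_support_finite (n : ℤ) (hn : 0 ≤ n) :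
    (Function.support fun l : ℤ => (-1 : ℤ) ^ l.natAbs * C n ((n + 3 * l).fdiv 2)).Finite := by
  apply (Set.finite_Icc (-n - 1) (n + 1)).subset
  intro l hl
  exact Set.mem_Icc.mpr (f_bounds hn hl)

lemma W_support_finite (n : ℤ) (hn : 0 ≤ n) : (Function.support (W n)).Finite := by
  apply (Set.finite_Icc (-n - 1) (n + 1)).subset
  intro l hl
  exact Set.mem_Icc.mpr (W_bounds hn hl)

lemma W_shift_support_finite (n : ℤ) (hn : 0 ≤ n) :
    (Function.support fun l : ℤ => W n (l - 1)).Finite := by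
  apply (Set.finite_Icc (-n) (n + 2)).subset
  intro l hl
  have := W_bounds hn (l := l - 1) hl
  exact Set.mem_Icc.mpr (by omega)

theorem slalom_amateur (n : ℤ) (hn : 0 ≤ n) : r n = 1 := by
  refine Int.le_induction (motive := fun n _ => r n = 1) ?_ ?_ n hn
  · simp only [r]
    rw [finsum_eq_single _ 0]
    · norm_num [C]
    · intro l hl
      have e : (0 + 3 * l).fdiv 2 = (0 + 3 * l) / 2 := Int.fdiv_eq_ediv_of_nonneg _ (by norm_num)
      simp only [C, e]
      rw [if_neg (by omega), mul_zero]
  · intro n hn ih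
    have hkey : (fun l : ℤ => (-1 : ℤ) ^ l.natAbs * C (n + 1) ((n + 1 + 3 * l).fdiv 2))
        = fun l : ℤ =>
          (-1 : ℤ) ^ l.natAbs * C n ((n + 3 * l).fdiv 2) + (W n l - W n (l - 1)) :=
      funext fun l => key n l hn
    simp only [r]
    rw [hkey, finsum_add_distrib (f_support_finite n hn)
      (((W_support_finite n hn).union (W_shift_support_finite n hn)).subset
        (Function.support_sub _ _)),
      finsum_sub_distrib (W_support_finite n hn) (W_shift_support_finite n hn)]
    have hshift : ∑ᶠ l : ℤ, W n (l - 1) = ∑ᶠ l : ℤ, W n l :=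
      finsum_comp_equiv (Equiv.subRight (1 : ℤ))
    simp only [r] at ih
    rw [hshift]
    rw [ih]
    ring
end

section
/- Let b(λ) = (5λ² - 3λ)/2 and define the polynomial Q(n) = Σ_λ (-1)^λ · x^{b(λ)} · [n choose ⌊(n-1+5λ)/2⌋], the sum over all integers λ. Then Q(n) = Q(n-1) + x^{n-1}·Q(n-2) for all n ≥ 2, with Q(0) = 0 and Q(1) = 1. -/
open RatFunc in
/-- Gaussian binomial coefficient `[n choose k]_x`, as a rational function in `x`,
zero out of range.  (It is in fact a polynomial.) -/
noncomputable def gb (n k : ℤ) : RatFunc ℚ :=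
  if 0 ≤ k ∧ k ≤ n then
    (∏ i ∈ Finset.range k.toNat, ((X : RatFunc ℚ) ^ (n - i) - 1)) /
      (∏ i ∈ Finset.range k.toNat, ((X : RatFunc ℚ) ^ (i + 1) - 1))
  else 0

/-- `b(λ) = (5λ² - 3λ)/2`. -/
def b (l : ℤ) : ℤ := (5 * l ^ 2 - 3 * l) / 2

/-- `Q(n) = Σ_λ (-1)^λ x^{b(λ)} [n choose ⌊(n-1+5λ)/2⌋]`, the sum over all integers `λ`. -/
noncomputable def Q (n : ℤ) : RatFunc ℚ :=
  ∑ᶠ l : ℤ, (-1 : RatFunc ℚ) ^ l.natAbs * RatFunc.X ^ (b l) * gb n ((n - 1 + 5 * l).fdiv 2)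

open RatFunc Finset


lemma hX : (X : RatFunc ℚ) ≠ 0 := RatFunc.X_ne_zero

lemma X_pow_ne_one (k : ℕ) (hk : k ≠ 0) : (X : RatFunc ℚ) ^ k ≠ 1 := by
  intro h
  have h2 : (Polynomial.X : Polynomial ℚ) ^ k = 1 := by
    apply RatFunc.algebraMap_injective ℚ  -- guess name
    simpa using h
  have := congrArg Polynomial.natDegree h2
  simp [Polynomial.natDegree_X_pow] at this
  exact hk this

lemma X_zpow_ne_one (m : ℤ) (hm : m ≠ 0) : (X : RatFunc ℚ) ^ m ≠ 1 := by
  rcases lt_or_gt_of_ne hm with h | h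
  · intro he
    have : (X : RatFunc ℚ) ^ (-m) = 1 := by
      rw [zpow_neg, he, inv_one]
    rw [show (-m) = ((-m).toNat : ℤ) by omega, zpow_natCast] at this
    exact X_pow_ne_one _ (by omega) this
  · intro he
    rw [show m = (m.toNat : ℤ) by omega, zpow_natCast] at he
    exact X_pow_ne_one _ (by omega) he

lemma X_zpow_sub_one_ne (m : ℤ) (hm : m ≠ 0) : (X : RatFunc ℚ) ^ m - 1 ≠ 0 :=
  sub_ne_zero.2 (X_zpow_ne_one m hm)

lemma den_ne_zero (k : ℕ) : (∏ i ∈ Finset.range k, ((X : RatFunc ℚ) ^ (i + 1) - 1)) ≠ 0 := by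
  apply Finset.prod_ne_zero_iff.2
  intro i _
  have := X_zpow_sub_one_ne (i+1) (by omega)
  rw [show ((i:ℤ)+1) = ((i+1 : ℕ) : ℤ) by push_cast; ring, zpow_natCast] at this
  exact this


lemma gb_out {n k : ℤ} (h : k < 0 ∨ n < k) : gb n k = 0 := by
  rw [gb, if_neg]; omega

lemma gb_in {n k : ℤ} (h1 : 0 ≤ k) (h2 : k ≤ n) :
    gb n k = (∏ i ∈ Finset.range k.toNat, ((X : RatFunc ℚ) ^ (n - i) - 1)) /
      (∏ i ∈ Finset.range k.toNat, ((X : RatFunc ℚ) ^ (i + 1) - 1)) := by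
  rw [gb, if_pos ⟨h1, h2⟩]

lemma gb_zero_right {n : ℤ} (h : 0 ≤ n) : gb n 0 = 1 := by
  rw [gb_in le_rfl h]; simp

lemma gb_self {n : ℤ} (h : 0 ≤ n) : gb n n = 1 := by
  rw [gb_in h le_rfl]
  rw [div_eq_one_iff_eq (den_ne_zero _)]
  rw [← Finset.prod_range_reflect (fun i => (X : RatFunc ℚ) ^ (i + 1) - 1) n.toNat]
  apply Finset.prod_congr rfl
  intro i hi
  simp only [Finset.mem_range] at hi
  have he : n - (i:ℤ) = ((n.toNat - 1 - i + 1 : ℕ) : ℤ) := by omega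
  rw [he, zpow_natCast]


lemma gb_R {m k : ℤ} (h1 : 1 ≤ k) (h2 : k ≤ m) :
    gb m k * ((X : RatFunc ℚ) ^ k - 1) = gb (m-1) (k-1) * ((X : RatFunc ℚ) ^ m - 1) := by
  have hj : k.toNat = (k-1).toNat + 1 := by omega
  rw [gb_in (by omega) h2, gb_in (by omega : (0:ℤ) ≤ k - 1) (by omega), hj]
  set j := (k-1).toNat with hjdef
  clear_value j
  have hnum : (∏ i ∈ Finset.range (j+1), ((X : RatFunc ℚ) ^ (m - i) - 1))
      = ((X : RatFunc ℚ) ^ m - 1) * ∏ i ∈ Finset.range j, ((X : RatFunc ℚ) ^ (m - 1 - i) - 1) := by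
    rw [Finset.prod_range_succ', mul_comm]
    have h0 : (X : RatFunc ℚ) ^ (m - (0:ℕ)) - 1 = (X : RatFunc ℚ) ^ m - 1 := by norm_num
    have hp : ∀ x ∈ Finset.range j, ((X : RatFunc ℚ) ^ (m - ((x:ℕ)+1 : ℕ)) - 1)
        = ((X : RatFunc ℚ) ^ (m - 1 - x) - 1) := by
      intro x _
      have : m - ((x:ℕ)+1 : ℕ) = m - 1 - (x:ℤ) := by push_cast; ring
      rw [this]
    rw [h0, Finset.prod_congr rfl hp]
  have hden : (∏ i ∈ Finset.range (j+1), ((X : RatFunc ℚ) ^ (i + 1) - 1))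
      = (∏ i ∈ Finset.range j, ((X : RatFunc ℚ) ^ (i + 1) - 1)) * ((X : RatFunc ℚ) ^ k - 1) := by
    rw [Finset.prod_range_succ]
    have : ((X : RatFunc ℚ) ^ ((j:ℕ)+1)) = (X : RatFunc ℚ) ^ k := by
      rw [← zpow_natCast (X : RatFunc ℚ) (j+1)]
      congr 1
      omega
    rw [this]
  rw [hnum, hden]
  have d1 := den_ne_zero j
  have d2 := X_zpow_sub_one_ne k (by omega)
  field_simp

lemma gb_C {m k : ℤ} (h1 : 1 ≤ k) (h2 : k ≤ m) :
    gb m k * ((X : RatFunc ℚ) ^ k - 1) = gb m (k-1) * ((X : RatFunc ℚ) ^ (m - k + 1) - 1) := by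
  have hj : k.toNat = (k-1).toNat + 1 := by omega
  rw [gb_in (by omega) h2, gb_in (by omega : (0:ℤ) ≤ k - 1) (by omega), hj]
  set j := (k-1).toNat with hjdef
  clear_value j
  have hnum : (∏ i ∈ Finset.range (j+1), ((X : RatFunc ℚ) ^ (m - i) - 1))
      = (∏ i ∈ Finset.range j, ((X : RatFunc ℚ) ^ (m - i) - 1)) * ((X : RatFunc ℚ) ^ (m - k + 1) - 1) := by
    rw [Finset.prod_range_succ]
    have : m - ((j:ℕ):ℤ) = m - k + 1 := by omega
    rw [this]
  have hden : (∏ i ∈ Finset.range (j+1), ((X : RatFunc ℚ) ^ (i + 1) - 1))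
      = (∏ i ∈ Finset.range j, ((X : RatFunc ℚ) ^ (i + 1) - 1)) * ((X : RatFunc ℚ) ^ k - 1) := by
    rw [Finset.prod_range_succ]
    have : ((X : RatFunc ℚ) ^ ((j:ℕ)+1)) = (X : RatFunc ℚ) ^ k := by
      rw [← zpow_natCast (X : RatFunc ℚ) (j+1)]
      congr 1
      omega
    rw [this]
  rw [hnum, hden]
  have d1 := den_ne_zero j
  have d2 := X_zpow_sub_one_ne k (by omega)
  field_simp


lemma gb_P1 {n : ℤ} (hn : 1 ≤ n) (k : ℤ) :
    gb n k = gb (n-1) k + (X : RatFunc ℚ) ^ (n-k) * gb (n-1) (k-1) := by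
  rcases lt_or_ge k 0 with hk | hk
  · rw [gb_out (Or.inl hk), gb_out (Or.inl hk), gb_out (Or.inl (show k-1 < 0 by omega))]; ring
  rcases eq_or_lt_of_le hk with hk0 | hk1
  · subst hk0
    rw [gb_zero_right (by omega), gb_zero_right (by omega),
      gb_out (Or.inl (show (0:ℤ)-1 < 0 by norm_num))]
    ring
  rcases lt_or_ge k n with hkn | hkn
  · have hc := X_zpow_sub_one_ne k (by omega)
    apply mul_right_cancel₀ hc
    rw [gb_R (by omega) (by omega), add_mul, mul_right_comm,
      gb_C (by omega) (show k ≤ n-1 by omega)]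
    rw [show n - 1 - k + 1 = n - k by ring]
    have h2 : (X : RatFunc ℚ) ^ (n-k) * (X : RatFunc ℚ) ^ k = X ^ n := by
      rw [← zpow_add₀ hX]; congr 1; ring
    linear_combination (-gb (n-1) (k-1)) * h2
  rcases eq_or_lt_of_le hkn with hkn0 | hkn1
  · subst hkn0
    rw [gb_self (by omega), gb_out (Or.inr (show n-1 < n by omega)),
      gb_self (show (0:ℤ) ≤ n-1 by omega), sub_self, zpow_zero]
    ring
  · rw [gb_out (Or.inr hkn1), gb_out (Or.inr (by omega : n-1 < k)),
      gb_out (Or.inr (by omega : n-1 < k-1))]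
    ring

lemma gb_P2 {n : ℤ} (hn : 1 ≤ n) (k : ℤ) :
    gb n k = (X : RatFunc ℚ) ^ k * gb (n-1) k + gb (n-1) (k-1) := by
  rcases lt_or_ge k 0 with hk | hk
  · rw [gb_out (Or.inl hk), gb_out (Or.inl hk), gb_out (Or.inl (show k-1 < 0 by omega))]; ring
  rcases eq_or_lt_of_le hk with hk0 | hk1
  · subst hk0
    rw [gb_zero_right (by omega), gb_zero_right (by omega),
      gb_out (Or.inl (show (0:ℤ)-1 < 0 by norm_num)), zpow_zero]
    ring
  rcases lt_or_ge k n with hkn | hkn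
  · have hc := X_zpow_sub_one_ne k (by omega)
    apply mul_right_cancel₀ hc
    rw [gb_R (by omega) (by omega), add_mul, mul_assoc,
      gb_C (by omega) (show k ≤ n-1 by omega)]
    rw [show n - 1 - k + 1 = n - k by ring]
    have h2 : (X : RatFunc ℚ) ^ k * (X : RatFunc ℚ) ^ (n-k) = X ^ n := by
      rw [← zpow_add₀ hX]; congr 1; ring
    linear_combination (-gb (n-1) (k-1)) * h2
  rcases eq_or_lt_of_le hkn with hkn0 | hkn1
  · subst hkn0
    rw [gb_self (by omega), gb_out (Or.inr (show n-1 < n by omega)),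
      gb_self (show (0:ℤ) ≤ n-1 by omega)]
    ring
  · rw [gb_out (Or.inr hkn1), gb_out (Or.inr (by omega : n-1 < k)),
      gb_out (Or.inr (by omega : n-1 < k-1))]
    ring



noncomputable def term (n l : ℤ) : RatFunc ℚ :=
  (-1 : RatFunc ℚ) ^ l.natAbs * RatFunc.X ^ (b l) * gb n ((n - 1 + 5 * l).fdiv 2)

lemma b_succ (l : ℤ) : b (l+1) = b l + (5*l + 1) := by
  unfold b
  rw [show 5 * (l+1) ^ 2 - 3 * (l+1) = (5 * l ^ 2 - 3 * l) + (5*l+1) * 2 by ring,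
    Int.add_mul_ediv_right _ _ (by norm_num : (2:ℤ) ≠ 0)]

lemma b_pred (l : ℤ) : b (l-1) = b l + (4 - 5*l) := by
  have := b_succ (l-1)
  simp only [sub_add_cancel] at this
  omega

lemma sign_pred (l : ℤ) :
    ((-1 : RatFunc ℚ)) ^ (l-1).natAbs = -(-1 : RatFunc ℚ) ^ l.natAbs := by
  rcases Int.even_or_odd l with he | ho
  · have h1 : Even l.natAbs := Int.natAbs_even.2 he
    have h2 : ¬ Even (l-1).natAbs := by
      rw [Int.natAbs_even]
      simp [Int.even_sub, parity_simps, he]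
    rw [h1.neg_one_pow, (Nat.not_even_iff_odd.1 h2).neg_one_pow]
  · have h1 : ¬ Even l.natAbs := by
      rw [Int.natAbs_even]
      exact Int.not_even_iff_odd.2 ho
    have h2 : Even (l-1).natAbs := by
      rw [Int.natAbs_even]
      simpa [Int.even_sub, parity_simps] using ho
    rw [(Nat.not_even_iff_odd.1 h1).neg_one_pow, h2.neg_one_pow]
    ring


noncomputable def G (n l : ℤ) : RatFunc ℚ :=
  if Even (n + l) then 0
  else (-1 : RatFunc ℚ) ^ l.natAbs * RatFunc.X ^ (b l) *
    RatFunc.X ^ ((n - 1 + 5 * l).fdiv 2) * gb (n-2) ((n - 1 + 5 * l).fdiv 2)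

lemma fdiv_eq {a k : ℤ} (h : a = 2*k ∨ a = 2*k+1) : a.fdiv 2 = k := by
  rw [Int.fdiv_eq_ediv_of_nonneg _ (by norm_num)]; omega

lemma key_s11 {n : ℤ} (hn : 2 ≤ n) (l : ℤ) :
    term n l - term (n-1) l - (X : RatFunc ℚ)^(n-1) * term (n-2) l = G n l - G n (l-1) := by
  rcases Int.even_or_odd (n + l) with ⟨m, hm⟩ | ⟨m, hm⟩
  · -- n + l even : k with n-2+5l = 2k
    set k := (n - 2 + 5*l)/2 with hkdef
    have hk : n - 2 + 5*l = 2*k := by omega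
    clear_value k
    have f1 : (n - 1 + 5*l).fdiv 2 = k := fdiv_eq (Or.inr (by omega))
    have f2 : (n - 1 - 1 + 5*l).fdiv 2 = k := fdiv_eq (Or.inl (by omega))
    have f3 : (n - 2 - 1 + 5*l).fdiv 2 = k - 1 := fdiv_eq (Or.inr (by omega))
    have f4 : (n - 1 + 5*(l-1)).fdiv 2 = k - 2 := fdiv_eq (k := k-2) (Or.inl (by omega))
    have hpos : Even (n + l) := ⟨m, hm⟩
    have hneg : ¬ Even (n + (l-1)) := by
      rintro ⟨t, ht⟩; omega
    simp only [term, G, f1, f2, f3, f4, if_pos hpos, if_neg hneg]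
    have e1 : gb n k = gb (n-1) k + (X : RatFunc ℚ)^(n-k) * gb (n-1) (k-1) :=
      gb_P1 (by omega) k
    have e2 : gb (n-1) (k-1) = (X : RatFunc ℚ)^(k-1) * gb (n-2) (k-1) + gb (n-2) (k-2) := by
      have h := gb_P2 (n := n-1) (by omega) (k-1)
      rw [show n-1-1 = n-2 by ring, show k-1-1 = k-2 by ring] at h
      exact h
    rw [e1, e2, sign_pred, b_pred, zpow_add₀ hX]
    have h2 : (X : RatFunc ℚ)^(n-k) * (X : RatFunc ℚ)^(k-1) = X^(n-1) := by
      rw [← zpow_add₀ hX]; congr 1; ring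
    have h3 : (X : RatFunc ℚ)^((4:ℤ)-5*l) * (X : RatFunc ℚ)^(k-2) = X^(n-k) := by
      rw [← zpow_add₀ hX]; congr 1; omega
    linear_combination ((-1 : RatFunc ℚ) ^ l.natAbs * X^(b l) * gb (n-2) (k-1)) * h2 +
      (-(-1 : RatFunc ℚ) ^ l.natAbs * X^(b l) * gb (n-2) (k-2)) * h3
  · -- n + l odd : k with n-1+5l = 2k
    set k := (n - 1 + 5*l)/2 with hkdef
    have hk : n - 1 + 5*l = 2*k := by omega
    clear_value k
    have f1 : (n - 1 + 5*l).fdiv 2 = k := fdiv_eq (Or.inl (by omega))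
    have f2 : (n - 1 - 1 + 5*l).fdiv 2 = k - 1 := fdiv_eq (Or.inr (by omega))
    have f3 : (n - 2 - 1 + 5*l).fdiv 2 = k - 1 := fdiv_eq (Or.inl (by omega))
    have f4 : (n - 1 + 5*(l-1)).fdiv 2 = k - 3 := fdiv_eq (k := k-3) (Or.inr (by omega))
    have hneg : ¬ Even (n + l) := by
      rintro ⟨t, ht⟩; omega
    have hpos : Even (n + (l-1)) := ⟨m, by omega⟩
    simp only [term, G, f1, f2, f3, f4, if_pos hpos, if_neg hneg]
    have e1 : gb n k = (X : RatFunc ℚ)^k * gb (n-1) k + gb (n-1) (k-1) :=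
      gb_P2 (by omega) k
    have e2 : gb (n-1) k = gb (n-2) k + (X : RatFunc ℚ)^(n-1-k) * gb (n-2) (k-1) := by
      have h := gb_P1 (n := n-1) (by omega) k
      rw [show n-1-1 = n-2 by ring] at h
      exact h
    rw [e1, e2]
    have h2 : (X : RatFunc ℚ)^k * (X : RatFunc ℚ)^(n-1-k) = X^(n-1) := by
      rw [← zpow_add₀ hX]; congr 1; ring
    linear_combination ((-1 : RatFunc ℚ) ^ l.natAbs * X^(b l) * gb (n-2) (k-1)) * h2



lemma term_zero {n l : ℤ} (h : 5*l < 1 - n ∨ n + 2 < 5*l) : term n l = 0 := by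
  rw [term, Int.fdiv_eq_ediv_of_nonneg _ (by norm_num), gb_out (by omega), mul_zero]

lemma G_zero {n l : ℤ} (h : 5*l < 1 - n ∨ 2*n - 3 < 5*l) : G n l = 0 := by
  rw [G]
  split
  · rfl
  · rw [Int.fdiv_eq_ediv_of_nonneg _ (by norm_num), gb_out (by omega), mul_zero]

lemma Q_eq_sum {n M : ℤ} (hM0 : 0 ≤ M) (hM : n + 3 ≤ 5*M) :
    Q n = ∑ l ∈ Finset.Icc (-M) M, term n l := by
  have hQ : Q n = ∑ᶠ l, term n l := rfl
  rw [hQ]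
  apply finsum_eq_finset_sum_of_support_subset
  intro l hl
  simp only [Function.mem_support] at hl
  simp only [Finset.coe_Icc, Set.mem_Icc]
  by_contra hc
  push_neg at hc
  apply hl
  apply term_zero
  by_cases h : -M ≤ l
  · right; have := hc h; omega
  · left; omega

lemma telescope {n M : ℤ} (hM0 : 0 ≤ M) (h1 : 5*(-M-1) < 1 - n) (h2 : 2*n - 3 < 5*M) :
    ∑ l ∈ Finset.Icc (-M) M, (G n l - G n (l-1)) = 0 := by
  rw [Finset.sum_sub_distrib]
  have A : ∑ l ∈ Finset.Icc (-M) M, G n (l-1) = ∑ l ∈ Finset.Icc (-M-1) (M-1), G n l := by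
    refine Finset.sum_bij' (fun l _ => l - 1) (fun l _ => l + 1) ?_ ?_ ?_ ?_ ?_ <;>
      simp only [Finset.mem_Icc] <;> intros <;> first | omega | rfl | simp
  rw [A]
  have S1 : ∑ l ∈ Finset.Icc (-M) M, G n l = ∑ l ∈ Finset.Icc (-M-1) M, G n l := by
    apply Finset.sum_subset
    · intro x; simp only [Finset.mem_Icc]; omega
    · intro x hx hnx
      simp only [Finset.mem_Icc] at hx hnx
      apply G_zero; left; omega
  have S2 : ∑ l ∈ Finset.Icc (-M-1) (M-1), G n l = ∑ l ∈ Finset.Icc (-M-1) M, G n l := by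
    apply Finset.sum_subset
    · intro x; simp only [Finset.mem_Icc]; omega
    · intro x hx hnx
      simp only [Finset.mem_Icc] at hx hnx
      apply G_zero; right; omega
  rw [S1, S2, sub_self]

lemma Q_rec (n : ℤ) (hn : 2 ≤ n) :
    Q n = Q (n - 1) + (RatFunc.X : RatFunc ℚ) ^ (n - 1) * Q (n - 2) := by
  rw [Q_eq_sum (M := n+2) (by omega) (by omega),
    Q_eq_sum (M := n+2) (by omega) (by omega),
    Q_eq_sum (M := n+2) (by omega) (by omega),
    Finset.mul_sum, ← Finset.sum_add_distrib, ← sub_eq_zero, ← Finset.sum_sub_distrib]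
  have : ∀ l ∈ Finset.Icc (-(n+2)) (n+2),
      term n l - (term (n-1) l + (X : RatFunc ℚ)^(n-1) * term (n-2) l) = G n l - G n (l-1) := by
    intro l _
    rw [sub_add_eq_sub_sub]
    exact key_s11 hn l
  rw [Finset.sum_congr rfl this]
  exact telescope (by omega) (by omega) (by omega)

lemma Q_zero : Q 0 = 0 := by
  apply finsum_eq_zero_of_forall_eq_zero
  intro l
  rw [Int.fdiv_eq_ediv_of_nonneg _ (by norm_num), gb_out (by omega), mul_zero]

lemma Q_one : Q 1 = 1 := by
  rw [show Q 1 = ∑ᶠ l : ℤ, term 1 l from rfl, finsum_eq_single _ 0]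
  · rw [term]
    norm_num
    rw [gb_zero_right (by norm_num : (0:ℤ) ≤ 1)]
    rw [show b 0 = (0:ℤ) by decide, zpow_zero]
    simp
  · intro x hx
    apply term_zero
    rcases lt_or_gt_of_ne hx with h | h
    · left; omega
    · right; omega

theorem gs2_pro :
    (∀ n : ℤ, 2 ≤ n → Q n = Q (n - 1) + (RatFunc.X : RatFunc ℚ) ^ (n - 1) * Q (n - 2)) ∧
      Q 0 = 0 ∧ Q 1 = 1 := by
  exact ⟨Q_rec, Q_zero, Q_one⟩
end
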